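/- Let G=(W,E) be a finite simple graph with E nonempty, let k be a natural number, and fix an orientation (x_e, y_e) of each edge e ∈ E. Construct the parliamentary election whose running parties are p_1, o_1, and one party s_w for each vertex w ∈ W, and whose voters are, for each edge e ∈ E: one voter ranking s_{x_e} ≻ s_{y_e} ≻ p_1 ≻ o_1 ≻ (all remaining parties in some fixed order); one voter ranking p_1 ≻ o_1 ≻ (all remaining parties); and two voters ranking o_1 first (then all remaining parties). Let the coalition be C = {p_1} ∪ {s_w : w ∈ W}, with no electoral threshold. Then G contains a k-clique if and only if there exists a set P⁻ ⊆ C with |P⁻| ≤ k such that, in the election obtained by deleting the parties of P⁻, the vote fraction of C ∖ P⁻ is at least 1/2 and the vote fraction of {p_1} is at least ((|E| + k(k−1)/2) / (2|E|)) times the vote fraction of C ∖ P⁻. -/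

import Mathlib

open scoped Classical

section Defs

variable {U V : Type*}

/-- `p` is the most-preferred member of the running set `P` under the linear order `L`
(greater means more preferred). -/
def TopOf (L : LinearOrder U) (P : Finset U) (p : U) : Prop :=
  p ∈ P ∧ ∀ q ∈ P, q ≠ p → L.lt q p

/-- Number of voters whose most-preferred running party lies in `A`. -/
noncomputable def votes [Fintype V] (pref : V → LinearOrder U) (P A : Finset U) : ℕ :=
  (Finset.univ.filter fun v : V => ∃ p ∈ A, TopOf (pref v) P p).card

/-- Fraction of voters whose most-preferred running party lies in `A`. -/
noncomputable def voteFrac [Fintype V] (pref : V → LinearOrder U) (P A : Finset U) : ℚ :=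
  (votes pref P A : ℚ) / (Fintype.card V : ℚ)

/-- Total number of votes received by active parties (receiving at least `T` votes) among `A`. -/
noncomputable def activeVotes [Fintype V] (pref : V → LinearOrder U) (P : Finset U) (T : ℕ)
    (A : Finset U) : ℕ :=
  ∑ p ∈ A, if T ≤ votes pref P {p} then votes pref P {p} else 0

/-- Active-vote fraction of `A`. -/
noncomputable def activeFrac [Fintype V] (pref : V → LinearOrder U) (P : Finset U) (T : ℕ)
    (A : Finset U) : ℚ :=
  (activeVotes pref P T A : ℚ) / (activeVotes pref P T P : ℚ)

/-- The linear order `L` respects the tier function `t` (smaller tier = more preferred). -/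
def PrefTiers (L : LinearOrder U) (t : U → ℕ) : Prop :=
  ∀ a b : U, t a < t b → L.lt b a

/-- Pairs `(p, q)` with `p ≻ q` under `L` and `q ≻ p` under `L'`. -/
noncomputable def invPairs [Fintype U] (L L' : LinearOrder U) : Finset (U × U) :=
  Finset.univ.filter fun pq : U × U => L.lt pq.2 pq.1 ∧ L'.lt pq.1 pq.2

/-- Swap-bribery cost of replacing `L` by `L'` with swap-price function `sw`. -/
noncomputable def swapCost [Fintype U] (L L' : LinearOrder U) (sw : U → U → ℝ) : ℝ :=
  ∑ pq ∈ invPairs L L', sw pq.1 pq.2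

end Defs

/-! If `p₁` survives the deletion, every edge still sends exactly its first two voters to the
coalition, so the coalition keeps `2|E|` of the `4|E|` votes; if `p₁` is deleted, only the first
voter of each edge can still vote for the coalition, which falls below one half. With `p₁`
surviving and `D` the set of deleted vertices, `p₁` receives `|E|` votes plus one for each edge
inside `D`, so the J+F condition says exactly that `D` spans at least `k.choose 2` edges. As
`|D| ≤ k` and `D` spans at most `|D|.choose 2` edges, this forces `|D| = k` and `D` a clique. -/

open Finset

section Voting
variable {U V : Type*}

lemma TopOf.unique {L : LinearOrder U} {P : Finset U} {p q : U}
    (hp : TopOf L P p) (hq : TopOf L P q) : p = q := by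
  by_contra h
  exact @lt_asymm U L.toPreorder _ _ (hp.2 q hq.1 (Ne.symm h)) (hq.2 p hp.1 h)

lemma PrefTiers.topOf {L : LinearOrder U} {t : U → ℕ} (h : PrefTiers L t) {P : Finset U} {p : U}
    (hp : p ∈ P) (hmin : ∀ q ∈ P, q ≠ p → t p < t q) : TopOf L P p :=
  ⟨hp, fun q hq hne => h p q (hmin q hq hne)⟩

lemma votes_eq_card_filter [Fintype V] [DecidableEq U] (pref : V → LinearOrder U)
    {P : Finset U} (A : Finset U) {top : V → U} (htop : ∀ v, TopOf (pref v) P (top v)) :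
    votes pref P A = #{v | top v ∈ A} :=
  congrArg card <| filter_congr fun v _ =>
    ⟨fun ⟨_, hpA, hp⟩ => hp.unique (htop v) ▸ hpA, fun h => ⟨top v, h, htop v⟩⟩

lemma votes_prod_eq_sum {I : Type*} [Fintype V] [Fintype I] [DecidableEq U]
    (pref : V × I → LinearOrder U) {P : Finset U} (A : Finset U) {top : V × I → U}
    (htop : ∀ v, TopOf (pref v) P (top v)) :
    votes pref P A = ∑ v, #{i | top (v, i) ∈ A} := by
  simp only [votes_eq_card_filter pref A htop, card_filter, Fintype.sum_prod_type]

end Voting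

lemma Nat.le_of_choose_two_le_choose_two {d k : ℕ} (hk : 2 ≤ k) (h : k.choose 2 ≤ d.choose 2) :
    k ≤ d := by
  by_contra! hdk
  obtain ⟨j, rfl⟩ : ∃ j, k = j + 1 := ⟨k - 1, by omega⟩
  have hdj := Nat.choose_le_choose 2 (Nat.le_of_lt_succ hdk)
  have hstep : (j + 1).choose 2 = j + j.choose 2 := by
    simpa [Nat.choose_one_right] using Nat.choose_succ_succ' j 1
  omega

namespace SimpleGraph
variable {W : Type*} [DecidableEq W] (G : SimpleGraph W) [Fintype G.edgeSet] (D : Finset W)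

lemma edgeFinset_inter_sym2_subset :
    G.edgeFinset ∩ D.sym2 ⊆ D.offDiag.image (Function.uncurry Sym2.mk) := by
  intro e he
  induction e using Sym2.ind with
  | h a b =>
    simp only [mem_inter, mem_edgeFinset, mem_edgeSet, mk_mem_sym2_iff] at he
    exact mem_image.2 ⟨(a, b), mem_offDiag.2 ⟨he.2.1, he.2.2, he.1.ne⟩, rfl⟩

lemma card_edgeFinset_inter_sym2_le : #(G.edgeFinset ∩ D.sym2) ≤ (#D).choose 2 :=
  Sym2.card_image_offDiag D ▸ card_le_card (G.edgeFinset_inter_sym2_subset D)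

lemma isClique_iff_choose_two_le :
    G.IsClique (D : Set W) ↔ (#D).choose 2 ≤ #(G.edgeFinset ∩ D.sym2) := by
  rw [← Sym2.card_image_offDiag]
  constructor
  · intro h
    refine card_le_card fun e he => ?_
    obtain ⟨⟨a, b⟩, hab, rfl⟩ := mem_image.1 he
    obtain ⟨ha, hb, hne⟩ := mem_offDiag.1 hab
    simp [ha, hb, h ha hb hne]
  · intro h a ha b hb hne
    have hab : s(a, b) ∈ G.edgeFinset ∩ D.sym2 :=
      (eq_of_subset_of_card_le (G.edgeFinset_inter_sym2_subset D) h).symm ▸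
        mem_image_of_mem (Function.uncurry Sym2.mk) (mem_offDiag.2 ⟨ha, hb, hne⟩ : (a, b) ∈ _)
    simpa using (mem_inter.1 hab).1

lemma exists_isClique_card_eq_of_choose_two_le (hE : G.edgeFinset.Nonempty) {k : ℕ}
    (hD : #D ≤ k) (h : k.choose 2 ≤ #(G.edgeFinset ∩ D.sym2)) :
    ∃ K : Finset W, #K = k ∧ G.IsClique (K : Set W) := by
  rcases lt_or_ge k 2 with hk | hk
  · have hfree : ¬G.CliqueFree k := fun hfree =>
      edgeFinset_nonempty.1 hE (cliqueFree_two.1 (hfree.mono hk.le))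
    obtain ⟨K, hK⟩ := not_forall_not.1 hfree
    exact ⟨K, hK.card_eq, hK.isClique⟩
  · have hDk : #D = k := le_antisymm hD <|
      Nat.le_of_choose_two_le_choose_two hk (h.trans (G.card_edgeFinset_inter_sym2_le D))
    exact ⟨D, hDk, (G.isClique_iff_choose_two_le D).2 (hDk ▸ h)⟩

end SimpleGraph

section Reduction
variable {W : Type*} [DecidableEq W]

def ballotTiers (a b : W) (i : Fin 4) : W ⊕ Fin 2 → ℕ :=
  if i = 0 then
    Sum.elim (fun w => if w = a then (0 : ℕ) else if w = b then 1 else 4)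
      (fun j : Fin 2 => if j = 0 then 2 else 3)
  else if i = 1 then
    Sum.elim (fun _ => (2 : ℕ)) (fun j : Fin 2 => if j = 0 then 0 else 1)
  else
    Sum.elim (fun _ => (1 : ℕ)) (fun j : Fin 2 => if j = 1 then 0 else 1)

def ballotTop (a b : W) (Pm : Finset (W ⊕ Fin 2)) : Fin 4 → W ⊕ Fin 2
  | 0 => if .inl a ∉ Pm then .inl a else if .inl b ∉ Pm then .inl b
      else if .inr 0 ∉ Pm then .inr 0 else .inr 1
  | 1 => if .inr 0 ∉ Pm then .inr 0 else .inr 1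
  | _ => .inr 1

lemma card_ballotTop_eq_inr_zero {a b : W} {Pm : Finset (W ⊕ Fin 2)} (hp : .inr 0 ∉ Pm) :
    #{i | ballotTop a b Pm i ∈ ({.inr 0} : Finset (W ⊕ Fin 2))} =
      1 + if s(a, b) ∈ Pm.toLeft.sym2 then 1 else 0 := by
  rw [card_filter, Fin.sum_univ_four]
  simp only [ballotTop, mk_mem_sym2_iff, mem_toLeft]
  split_ifs <;> simp_all

variable [Fintype W]

lemma topOf_ballotTop {L : LinearOrder (W ⊕ Fin 2)} {a b : W} {i : Fin 4}
    (hL : PrefTiers L (ballotTiers a b i)) {Pm : Finset (W ⊕ Fin 2)} (ho : .inr 1 ∉ Pm) :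
    TopOf L (univ \ Pm) (ballotTop a b Pm i) := by
  fin_cases i <;> refine hL.topOf ?_ ?_ <;>
    simp only [Fin.isValue, Fin.zero_eta, Fin.mk_one, ballotTop]
  all_goals try rintro (w | j) hq hne
  all_goals (try fin_cases j) <;> (try simp only [ballotTiers]) <;> (try split_ifs at *) <;>
    simp_all <;> split_ifs <;> simp_all

abbrev coalition : Finset (W ⊕ Fin 2) := insert (.inr 0) (univ.image .inl)

variable {a b : W} {Pm : Finset (W ⊕ Fin 2)}

lemma card_ballotTop_mem_coalition_sdiff (hp : .inr 0 ∉ Pm) :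
    #{i | ballotTop a b Pm i ∈ coalition \ Pm} = 2 := by
  rw [card_filter, Fin.sum_univ_four]
  simp only [ballotTop]
  split_ifs <;> simp_all

lemma card_ballotTop_mem_coalition_sdiff_le (hp : .inr 0 ∈ Pm) :
    #{i | ballotTop a b Pm i ∈ coalition \ Pm} ≤ 1 := by
  rw [card_filter, Fin.sum_univ_four]
  simp only [ballotTop]
  split_ifs <;> simp_all

variable {G : SimpleGraph W} [Fintype G.edgeSet] {x y : Sym2 W → W}
  {pref : G.edgeFinset × Fin 4 → LinearOrder (W ⊕ Fin 2)}
  (hpref : ∀ e i, PrefTiers (pref (e, i)) (ballotTiers (x e) (y e) i)) (hPm : Pm ⊆ coalition)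
include hpref hPm

lemma votes_eq_sum_ballotTop (A : Finset (W ⊕ Fin 2)) :
    votes pref (univ \ Pm) A = ∑ e : G.edgeFinset, #{i | ballotTop (x e) (y e) Pm i ∈ A} := by
  have ho : (.inr 1 : W ⊕ Fin 2) ∉ Pm := fun h => by simpa using hPm h
  exact votes_prod_eq_sum pref A (top := fun v => ballotTop (x v.1) (y v.1) Pm v.2)
    fun v => topOf_ballotTop (hpref v.1 v.2) ho

lemma votes_coalition_sdiff (hp : .inr 0 ∉ Pm) :
    votes pref (univ \ Pm) (coalition \ Pm) = 2 * #G.edgeFinset := by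
  rw [votes_eq_sum_ballotTop hpref hPm]
  simp only [card_ballotTop_mem_coalition_sdiff hp, sum_const, card_univ, Fintype.card_coe,
    smul_eq_mul, mul_comm]

lemma votes_coalition_sdiff_le (hp : .inr 0 ∈ Pm) :
    votes pref (univ \ Pm) (coalition \ Pm) ≤ #G.edgeFinset := by
  rw [votes_eq_sum_ballotTop hpref hPm, ← Fintype.card_coe G.edgeFinset, Fintype.card_eq_sum_ones]
  exact sum_le_sum fun e _ => card_ballotTop_mem_coalition_sdiff_le hp

lemma votes_singleton_inr_zero (hxy : ∀ e ∈ G.edgeFinset, e = s(x e, y e)) (hp : .inr 0 ∉ Pm) :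
    votes pref (univ \ Pm) {.inr 0} = #G.edgeFinset + #(G.edgeFinset ∩ Pm.toLeft.sym2) := by
  rw [votes_eq_sum_ballotTop hpref hPm, ← filter_mem_eq_inter, card_filter]
  simp only [card_ballotTop_eq_inr_zero hp, ← hxy _ (coe_mem _), sum_add_distrib, sum_const,
    card_univ, Fintype.card_coe, smul_eq_mul, mul_one]
  rw [sum_coe_sort G.edgeFinset (fun e => if e ∈ Pm.toLeft.sym2 then 1 else 0)]

end Reduction

lemma jf_condition_iff {m a c : ℕ} (hm : 0 < m) :
    ((m + a : ℕ) : ℚ) / ((2 * m : ℕ) : ℚ) * (((2 * m : ℕ) : ℚ) / ((m * 4 : ℕ) : ℚ)) ≤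
      ((m + c : ℕ) : ℚ) / ((m * 4 : ℕ) : ℚ) ↔ a ≤ c := by
  rw [div_mul_div_cancel₀ (by positivity), div_le_div_iff_of_pos_right (by positivity),
    Nat.cast_le]
  omega

lemma half_le_div_mul_four_iff {m v : ℕ} (hm : 0 < m) :
    (1 : ℚ) / 2 ≤ (v : ℚ) / ((m * 4 : ℕ) : ℚ) ↔ 2 * m ≤ v := by
  rw [le_div_iff₀ (by positivity), ← Nat.cast_le (α := ℚ)]
  push_cast
  constructor <;> intro h <;> linarith

/-- Election (deleting coalition parties, J+F objective, no threshold):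
parties are $p_1$ (= `Sum.inr 0`), $o_1$ (= `Sum.inr 1`), and one party $s_w$ (= `Sum.inl w`)
per vertex; per edge $e$ there are four voters: one ranking
$s_{x_e} ≻ s_{y_e} ≻ p_1 ≻ o_1 ≻$ rest, one ranking $p_1 ≻ o_1 ≻$ rest and two ranking $o_1$
first.  The coalition is $C = \{p_1\} ∪ \{s_w\}$.  Then $G$ has a $k$-clique iff at most $k$
coalition parties can be deleted so that afterwards the coalition's vote fraction is at
least $1/2$ and $p_1$'s vote fraction is at least $(|E|+k(k-1)/2)/(2|E|)$ times the
coalition's. -/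
theorem dcp_JF_clique_reduction
    {W : Type*} [Fintype W] [DecidableEq W]
    (G : SimpleGraph W) [DecidableRel G.Adj] (hE : G.edgeFinset.Nonempty) (k : ℕ)
    (x y : Sym2 W → W) (hxy : ∀ e ∈ G.edgeFinset, e = s(x e, y e))
    (pref : ↥G.edgeFinset × Fin 4 → LinearOrder (W ⊕ Fin 2))
    (hpref : ∀ (e : ↥G.edgeFinset) (i : Fin 4), PrefTiers (pref (e, i))
      (if i = 0 then
        Sum.elim (fun w => if w = x ↑e then (0 : ℕ) else if w = y ↑e then 1 else 4)
          (fun j : Fin 2 => if j = 0 then 2 else 3)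
      else if i = 1 then
        Sum.elim (fun _ => (2 : ℕ)) (fun j : Fin 2 => if j = 0 then 0 else 1)
      else
        Sum.elim (fun _ => (1 : ℕ)) (fun j : Fin 2 => if j = 1 then 0 else 1))) :
    (∃ K : Finset W, K.card = k ∧ G.IsClique (K : Set W)) ↔
    (∃ Pm : Finset (W ⊕ Fin 2),
      Pm ⊆ insert (Sum.inr 0) (Finset.univ.image Sum.inl) ∧ Pm.card ≤ k ∧
      (1 : ℚ) / 2 ≤
        voteFrac pref (Finset.univ \ Pm)
          (insert (Sum.inr 0) (Finset.univ.image Sum.inl) \ Pm) ∧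
      (((G.edgeFinset.card + k * (k - 1) / 2 : ℕ) : ℚ) / ((2 * G.edgeFinset.card : ℕ) : ℚ)) *
          voteFrac pref (Finset.univ \ Pm)
            (insert (Sum.inr 0) (Finset.univ.image Sum.inl) \ Pm) ≤
        voteFrac pref (Finset.univ \ Pm) {Sum.inr 0}) := by
  have hpref' : ∀ e i, PrefTiers (pref (e, i)) (ballotTiers (x e) (y e) i) := hpref
  have hm : 0 < #G.edgeFinset := hE.card_pos
  have hV : Fintype.card (G.edgeFinset × Fin 4) = #G.edgeFinset * 4 := by
    rw [Fintype.card_prod, Fintype.card_coe, Fintype.card_fin]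
  simp only [voteFrac, hV, ← Nat.choose_two_right]
  constructor
  · rintro ⟨K, hK, hclique⟩
    have hPm : K.disjSum ∅ ⊆ coalition := by
      intro p hp
      obtain ⟨w, -, rfl⟩ | ⟨j, hj, -⟩ := mem_disjSum.1 hp
      · exact mem_insert_of_mem (mem_image_of_mem _ (mem_univ w))
      · exact absurd hj (notMem_empty j)
    have hp : (.inr 0 : W ⊕ Fin 2) ∉ K.disjSum ∅ := by simp
    refine ⟨K.disjSum ∅, hPm, by simp [hK], ?_, ?_⟩
    · rw [votes_coalition_sdiff hpref' hPm hp]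
      exact (half_le_div_mul_four_iff hm).2 le_rfl
    · rw [votes_coalition_sdiff hpref' hPm hp, votes_singleton_inr_zero hpref' hPm hxy hp, toLeft_disjSum,
        jf_condition_iff hm, ← hK]
      exact (G.isClique_iff_choose_two_le K).1 hclique
  · rintro ⟨Pm, hPm, hcard, hhalf, hjf⟩
    have hp : (.inr 0 : W ⊕ Fin 2) ∉ Pm := fun hp => by
      have := (half_le_div_mul_four_iff hm).1 hhalf
      have := this.trans (votes_coalition_sdiff_le hpref' hPm hp)
      omega
    rw [votes_coalition_sdiff hpref' hPm hp, votes_singleton_inr_zero hpref' hPm hxy hp,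
      jf_condition_iff hm] at hjf
    exact G.exists_isClique_card_eq_of_choose_two_le _ hE (card_toLeft_le.trans hcard) hjf
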